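/- Let h > 0, δ ∈ [0,1], and 0 ≤ τ ≤ τ_M := h/(√2·(1−δ) + δ). Then for every u : ℤ × ℤ → ℝ and every (i,j) ∈ ℤ × ℤ, the explicit erosion update u'(i,j) := u(i,j) − τ·(E u)(i,j) satisfies min_{(a,b)∈{−1,0,1}²} u(i+a, j+b) ≤ u'(i,j) ≤ u(i,j). Consequently, if m ≤ u ≤ M pointwise, then m ≤ u' ≤ M pointwise. -/

import Mathlib

/-- The weighted Rouy–Tourin discretisation of the erosion speed `|∇u|` (downwind version). -/
noncomputable def erosionSpeed (h δ : ℝ) (u : ℤ × ℤ → ℝ) (p : ℤ × ℤ) : ℝ :=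
  ((1 - δ) / h) *
      Real.sqrt
        ((max (u p - u (p.1 + 1, p.2)) (max (u p - u (p.1 - 1, p.2)) 0)) ^ 2
          + (max (u p - u (p.1, p.2 + 1)) (max (u p - u (p.1, p.2 - 1)) 0)) ^ 2)
    + (δ / (Real.sqrt 2 * h)) *
      Real.sqrt
        ((max (u p - u (p.1 + 1, p.2 + 1)) (max (u p - u (p.1 - 1, p.2 - 1)) 0)) ^ 2
          + (max (u p - u (p.1 - 1, p.2 + 1)) (max (u p - u (p.1 + 1, p.2 - 1)) 0)) ^ 2)

/-- The set of offsets `{-1,0,1} × {-1,0,1}` describing the 3×3 neighbourhood. -/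
noncomputable def offsets : Finset (ℤ × ℤ) := (Finset.Icc (-1 : ℤ) 1) ×ˢ (Finset.Icc (-1 : ℤ) 1)

lemma offsets_nonempty : offsets.Nonempty := ⟨(0, 0), by decide⟩

/-!
Each one-sided difference `max (u p - u q) (max (u p - u q') 0)` lies in `[0, u p - m]`, where
`m` is the minimum of `u` over the 3×3 neighbourhood of `p`. Hence each square root in the
erosion speed is at most `√2 (u p - m)`, so `h E u p ≤ (√2 (1 - δ) + δ) (u p - m)`, and the
CFL condition `τ ≤ h / (√2 (1 - δ) + δ)` gives `0 ≤ τ E u p ≤ u p - m`.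
-/

lemma sqrt_sq_add_sq_le {a b c : ℝ} (ha : 0 ≤ a) (hb : 0 ≤ b) (hac : a ≤ c) (hbc : b ≤ c) :
    √(a ^ 2 + b ^ 2) ≤ √2 * c := by
  have hc : 0 ≤ c := ha.trans hac
  calc √(a ^ 2 + b ^ 2) ≤ √(2 * c ^ 2) := Real.sqrt_le_sqrt (by nlinarith)
    _ = √2 * c := by rw [Real.sqrt_mul zero_le_two, Real.sqrt_sq hc]

lemma max_sub_max_zero_le {m x y z : ℝ} (hx : m ≤ x) (hy : m ≤ y) (hz : m ≤ z) :
    max (x - y) (max (x - z) 0) ≤ x - m :=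
  max_le (by linarith) (max_le (by linarith) (by linarith))

lemma sqrt_upwind_le {m x y₁ z₁ y₂ z₂ : ℝ} (hx : m ≤ x) (hy₁ : m ≤ y₁) (hz₁ : m ≤ z₁)
    (hy₂ : m ≤ y₂) (hz₂ : m ≤ z₂) :
    √(max (x - y₁) (max (x - z₁) 0) ^ 2 + max (x - y₂) (max (x - z₂) 0) ^ 2) ≤ √2 * (x - m) :=
  sqrt_sq_add_sq_le (le_max_of_le_right (le_max_right _ _))
    (le_max_of_le_right (le_max_right _ _))
    (max_sub_max_zero_le hx hy₁ hz₁) (max_sub_max_zero_le hx hy₂ hz₂)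

lemma erosionSpeed_nonneg {h δ : ℝ} (hh : 0 ≤ h) (hδ : δ ∈ Set.Icc (0 : ℝ) 1)
    (u : ℤ × ℤ → ℝ) (p : ℤ × ℤ) : 0 ≤ erosionSpeed h δ u p := by
  have : 0 ≤ 1 - δ := sub_nonneg.2 hδ.2
  have := hδ.1
  unfold erosionSpeed
  positivity

lemma erosionSpeed_le_of_le_neighbours {h δ m : ℝ} (hh : 0 ≤ h) (hδ : δ ∈ Set.Icc (0 : ℝ) 1)
    {u : ℤ × ℤ → ℝ} {p : ℤ × ℤ} (hm : ∀ q ∈ offsets, m ≤ u (p.1 + q.1, p.2 + q.2)) :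
    erosionSpeed h δ u p ≤ (√2 * (1 - δ) + δ) / h * (u p - m) := by
  have nb : ∀ a b : ℤ, (a, b) ∈ offsets → m ≤ u (p.1 + a, p.2 + b) := fun a b hab => hm _ hab
  have hC : m ≤ u p := by simpa using nb 0 0 (by decide)
  have hE := nb 1 0 (by decide)
  have hW := nb (-1) 0 (by decide)
  have hN := nb 0 1 (by decide)
  have hS := nb 0 (-1) (by decide)
  have hNE := nb 1 1 (by decide)
  have hSW := nb (-1) (-1) (by decide)
  have hNW := nb (-1) 1 (by decide)
  have hSE := nb 1 (-1) (by decide)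
  simp only [add_zero, ← sub_eq_add_neg] at hE hW hN hS hNE hSW hNW hSE
  have h1δ : 0 ≤ 1 - δ := sub_nonneg.2 hδ.2
  have hδ0 := hδ.1
  calc erosionSpeed h δ u p
      ≤ (1 - δ) / h * (√2 * (u p - m)) + δ / (√2 * h) * (√2 * (u p - m)) := by
        unfold erosionSpeed
        gcongr
        · exact sqrt_upwind_le hC hE hW hN hS
        · exact sqrt_upwind_le hC hNE hSW hNW hSE
    _ = (√2 * (1 - δ) + δ) / h * (u p - m) := by field_simp

lemma sub_mul_erosionSpeed_mem_Icc {h δ τ m : ℝ} (hh : 0 < h) (hδ : δ ∈ Set.Icc (0 : ℝ) 1)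
    (hτ0 : 0 ≤ τ) (hτ : τ ≤ h / (√2 * (1 - δ) + δ))
    {u : ℤ × ℤ → ℝ} {p : ℤ × ℤ} (hm : ∀ q ∈ offsets, m ≤ u (p.1 + q.1, p.2 + q.2)) :
    u p - τ * erosionSpeed h δ u p ∈ Set.Icc m (u p) := by
  have hK : 0 < √2 * (1 - δ) + δ := by
    have : 1 ≤ √2 := Real.one_le_sqrt.2 one_le_two
    nlinarith [hδ.1, hδ.2]
  have hd : 0 ≤ u p - m := sub_nonneg.2 (by simpa using hm (0, 0) (by decide))
  have hτK : τ * (√2 * (1 - δ) + δ) / h ≤ 1 := by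
    rwa [div_le_one hh, ← le_div_iff₀ hK]
  have hspeed : τ * erosionSpeed h δ u p ≤ u p - m :=
    calc τ * erosionSpeed h δ u p
        ≤ τ * ((√2 * (1 - δ) + δ) / h * (u p - m)) :=
          mul_le_mul_of_nonneg_left (erosionSpeed_le_of_le_neighbours hh.le hδ hm) hτ0
      _ = τ * (√2 * (1 - δ) + δ) / h * (u p - m) := by ring
      _ ≤ u p - m := mul_le_of_le_one_left hd hτK
  have := mul_nonneg hτ0 (erosionSpeed_nonneg hh.le hδ u p)
  exact ⟨by linarith, by linarith⟩

theorem erosion_update_bounds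
    (h δ τ : ℝ) (hh : 0 < h) (hδ : δ ∈ Set.Icc (0 : ℝ) 1)
    (hτ0 : 0 ≤ τ) (hτ : τ ≤ h / (Real.sqrt 2 * (1 - δ) + δ))
    (u : ℤ × ℤ → ℝ) :
    (∀ p : ℤ × ℤ,
        offsets.inf' offsets_nonempty (fun q => u (p.1 + q.1, p.2 + q.2))
            ≤ u p - τ * erosionSpeed h δ u p ∧
          u p - τ * erosionSpeed h δ u p ≤ u p) ∧
      (∀ m M : ℝ, (∀ p, m ≤ u p ∧ u p ≤ M) →
        ∀ p, m ≤ u p - τ * erosionSpeed h δ u p ∧ u p - τ * erosionSpeed h δ u p ≤ M) := by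
  refine ⟨fun p => sub_mul_erosionSpeed_mem_Icc hh hδ hτ0 hτ fun q hq => Finset.inf'_le _ hq,
    fun m M hmM p => ?_⟩
  have hp := sub_mul_erosionSpeed_mem_Icc hh hδ hτ0 hτ fun q _ => (hmM (p.1 + q.1, p.2 + q.2)).1
  exact ⟨hp.1, hp.2.trans (hmM p).2⟩
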